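/- Let K be a commutative ring, M a finitely presented K-module with symmetric bilinear form ⟨-,-⟩, and R = {(x,y) ∈ End_K(M)^op × End_K(M) | ⟨xm, m'⟩ = ⟨m, ym'⟩ for all m, m' ∈ M}. Then R is a K-subalgebra of End_K(M)^op × End_K(M), and R is locally finite. -/

import Mathlib

/-- A `K`-algebra is locally finite if every finite subset is contained in a subalgebra
which is finitely generated as a `K`-module. -/
def IsLocallyFiniteAlgebra (K A : Type*) [CommRing K] [Ring A] [Algebra K A] : Prop :=
  ∀ s : Finset A, ∃ S : Subalgebra K A, (↑s : Set A) ⊆ (S : Set A) ∧ Module.Finite K S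

/-- The subalgebra `R = {(xᵒᵖ, y) ∈ End_K(M)ᵒᵖ × End_K(M) | ⟨xm, m'⟩ = ⟨m, ym'⟩}` of pairs
of endomorphisms adjoint with respect to a bilinear form `B`. -/
def adjointPairSubalgebra {K M : Type*} [CommRing K] [AddCommGroup M] [Module K M]
    (B : M →ₗ[K] M →ₗ[K] K) :
    Subalgebra K ((Module.End K M)ᵐᵒᵖ × Module.End K M) where
  carrier := {p | ∀ m m' : M, B (p.1.unop m) m' = B m (p.2 m')}
  add_mem' := by
    intro p q hp hq m m'
    simp only [Prod.fst_add, Prod.snd_add, MulOpposite.unop_add, LinearMap.add_apply,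
      map_add, LinearMap.add_apply] at *
    rw [hp, hq]
  mul_mem' := by
    intro p q hp hq m m'
    simp only [Prod.fst_mul, Prod.snd_mul, MulOpposite.unop_mul, Module.End.mul_apply] at *
    rw [hq, hp]
  algebraMap_mem' := by
    intro r m m'
    simp [Algebra.algebraMap_eq_smul_one, map_smul, LinearMap.smul_apply]

/-! A finite set of endomorphisms of `M` is defined over a finitely generated subring `K₀ ⊆ K`:
the coefficients expressing their values on a finite generating family `u` of `M` in terms of `u`
generate `K₀`, and the `K₀`-lattice `M₀ = span K₀ u` is stable under all of them. As `K₀` is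
Noetherian, the `K₀`-endomorphisms of `M₀`, and with them the `K₀`-algebra generated by finitely
many pairs in `End_K(M)ᵐᵒᵖ × End_K(M)`, form a finite `K₀`-module. Its `K`-span is the
`K`-algebra generated by these pairs, which is therefore a finite `K`-module; since this
subalgebra lies in `R` whenever the pairs do, `R` is locally finite. -/

theorem isLocallyFiniteAlgebra_of_finite_adjoin {K A : Type*} [CommRing K] [Ring A] [Algebra K A]
    (h : ∀ s : Finset A, Module.Finite K (Algebra.adjoin K (s : Set A))) :
    IsLocallyFiniteAlgebra K A :=
  fun s ↦ ⟨Algebra.adjoin K s, Algebra.subset_adjoin, h s⟩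

theorem Algebra.finite_adjoin_of_injective {K A B : Type*} [CommRing K] [Ring A] [Ring B]
    [Algebra K A] [Algebra K B] (f : A →ₐ[K] B) (hf : Function.Injective f) {s : Set A}
    (h : Module.Finite K (Algebra.adjoin K (f '' s))) : Module.Finite K (Algebra.adjoin K s) := by
  rw [Algebra.adjoin_image] at h
  exact Module.Finite.equiv (Subalgebra.equivMapOfInjective _ f hf).symm.toLinearEquiv

theorem Algebra.finite_adjoin_of_subset_range {K₀ K A B : Type*} [CommRing K₀] [CommRing K]
    [Ring A] [Ring B] [Algebra K₀ K] [Algebra K A] [Algebra K₀ A] [IsScalarTower K₀ K A]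
    [Algebra K₀ B] [IsNoetherianRing K₀] [Module.Finite K₀ B] (φ : B →ₐ[K₀] A) {s : Set A}
    (hs : s ⊆ Set.range φ) : Module.Finite K (Algebra.adjoin K s) := by
  have hle : Subalgebra.toSubmodule (Algebra.adjoin K₀ s) ≤ LinearMap.range φ.toLinearMap :=
    Algebra.adjoin_le (S := φ.range) hs
  have := isNoetherian_of_le hle
  obtain ⟨g, hg⟩ := Module.Finite.iff_fg.mp (inferInstance :
    Module.Finite K₀ (Subalgebra.toSubmodule (Algebra.adjoin K₀ s)))
  refine Module.Finite.iff_fg (N := Subalgebra.toSubmodule (Algebra.adjoin K s)) |>.mpr ⟨g, ?_⟩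
  -- both algebras are spans of the monoid closure of `s`, so `adjoin K s = span K (adjoin K₀ s)`
  rw [← Submodule.span_span_of_tower K₀, hg, Algebra.adjoin_eq_span, Algebra.adjoin_eq_span,
    Submodule.span_span_of_tower]

section Stabilizer

variable {K₀ K M : Type*} [CommRing K₀] [CommRing K] [Algebra K₀ K] [AddCommGroup M] [Module K M]
  [Module K₀ M] [IsScalarTower K₀ K M]

variable (K) in
def Submodule.endStabilizer (M₀ : Submodule K₀ M) : Subalgebra K₀ (Module.End K M) where
  carrier := {f | ∀ x ∈ M₀, f x ∈ M₀}
  mul_mem' hf hg x hx := hf _ (hg x hx)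
  add_mem' hf hg x hx := M₀.add_mem (hf x hx) (hg x hx)
  algebraMap_mem' a x hx := by
    rw [Module.algebraMap_end_apply]
    exact M₀.smul_mem a hx

theorem Submodule.mem_endStabilizer_span {s : Set M} {f : Module.End K M}
    (hf : ∀ x ∈ s, f x ∈ span K₀ s) : f ∈ (span K₀ s).endStabilizer K := fun _ hx ↦
  span_le (p := (span K₀ s).comap (f.restrictScalars K₀)) |>.mpr hf hx

theorem Submodule.finite_endStabilizer [IsNoetherianRing K₀] (M₀ : Submodule K₀ M)
    [Module.Finite K₀ M₀] (hM₀ : span K (M₀ : Set M) = ⊤) :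
    Module.Finite K₀ (M₀.endStabilizer K) := by
  let restrict : M₀.endStabilizer K →ₗ[K₀] (M₀ →ₗ[K₀] M₀) :=
    { toFun f := ((f : Module.End K M).restrictScalars K₀).restrict f.2
      map_add' _ _ := rfl
      map_smul' _ _ := rfl }
  have : IsNoetherian K₀ (M₀.endStabilizer K) := isNoetherian_of_injective restrict fun f g hfg ↦
    Subtype.ext <| LinearMap.ext_on hM₀ fun x hx ↦
      congrArg Subtype.val (LinearMap.congr_fun hfg ⟨x, hx⟩)
  infer_instance

end Stabilizer

theorem Module.End.exists_noetherian_lattice {K M : Type*} [CommRing K] [AddCommGroup M]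
    [Module K M] [Module.Finite K M] (F : Finset (Module.End K M)) :
    ∃ K₀ : Subalgebra ℤ K, IsNoetherianRing K₀ ∧ ∃ M₀ : Submodule K₀ M, Module.Finite K₀ M₀ ∧
      Submodule.span K (M₀ : Set M) = ⊤ ∧ ∀ f ∈ F, f ∈ M₀.endStabilizer K := by
  classical
  obtain ⟨k, u, hu⟩ := Module.Finite.exists_fin (R := K) (M := M)
  have hcoef (f : Module.End K M) (i : Fin k) : ∃ c : Fin k → K, ∑ j, c j • u j = f (u i) :=
    (Submodule.mem_span_range_iff_exists_fun K).mp (hu ▸ Submodule.mem_top)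
  choose c hc using hcoef
  let K₀ := Algebra.adjoin ℤ
    ((F ×ˢ Finset.univ ×ˢ Finset.univ).image fun p ↦ c p.1 p.2.1 p.2.2 : Set K)
  have : Algebra.FiniteType ℤ K₀ := (Subalgebra.fg_iff_finiteType _).mp
    (Subalgebra.fg_adjoin_finset _)
  refine ⟨K₀, Algebra.FiniteType.isNoetherianRing ℤ K₀, Submodule.span K₀ (Set.range u),
    Module.Finite.span_of_finite K₀ (Set.finite_range u), ?_, ?_⟩
  · rw [Submodule.span_span_of_tower, hu]
  · rintro f hf
    refine Submodule.mem_endStabilizer_span ?_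
    rintro _ ⟨i, rfl⟩
    rw [← hc f i]
    refine Submodule.sum_mem _ fun j _ ↦ Submodule.smul_mem _
      (⟨c f i j, Algebra.subset_adjoin ?_⟩ : K₀) (Submodule.subset_span ⟨j, rfl⟩)
    simpa using ⟨f, hf, i, j, rfl⟩

theorem Module.End.finite_adjoin_mulOpposite_prod {K M : Type*} [CommRing K] [AddCommGroup M]
    [Module K M] [Module.Finite K M] (s : Finset ((Module.End K M)ᵐᵒᵖ × Module.End K M)) :
    Module.Finite K (Algebra.adjoin K (s : Set ((Module.End K M)ᵐᵒᵖ × Module.End K M))) := by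
  classical
  obtain ⟨K₀, _, M₀, _, hM₀, hF⟩ :=
    Module.End.exists_noetherian_lattice (s.image (·.1.unop) ∪ s.image (·.2))
  let S := M₀.endStabilizer K
  have := M₀.finite_endStabilizer hM₀
  refine Algebra.finite_adjoin_of_subset_range (K₀ := K₀) ((AlgHom.op S.val).prodMap S.val) ?_
  intro w hw
  exact ⟨(MulOpposite.op ⟨w.1.unop, hF _ (Finset.mem_union_left _ (Finset.mem_image_of_mem _ hw))⟩,
    ⟨w.2, hF _ (Finset.mem_union_right _ (Finset.mem_image_of_mem _ hw))⟩), rfl⟩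

theorem adjointPairSubalgebra_locallyFinite_general
    {K M : Type*} [CommRing K] [AddCommGroup M] [Module K M]
    [Module.FinitePresentation K M]
    (B : M →ₗ[K] M →ₗ[K] K) :
    IsLocallyFiniteAlgebra K (adjointPairSubalgebra B) :=
  isLocallyFiniteAlgebra_of_finite_adjoin fun s ↦ by
    have h := Module.End.finite_adjoin_mulOpposite_prod (s.map (Function.Embedding.subtype _))
    rw [Finset.coe_map] at h
    exact Algebra.finite_adjoin_of_injective (adjointPairSubalgebra B).val Subtype.val_injective h

/-- For a finitely presented `K`-module `M` with a symmetric bilinear form `B`, the algebra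
`R` of adjoint pairs is a `K`-subalgebra of `End_K(M)ᵒᵖ × End_K(M)` (by construction above)
and it is locally finite. -/
theorem adjointPairSubalgebra_locallyFinite
    {K M : Type*} [CommRing K] [AddCommGroup M] [Module K M]
    [Module.FinitePresentation K M]
    (B : M →ₗ[K] M →ₗ[K] K) (hB : ∀ m m' : M, B m m' = B m' m) :
    IsLocallyFiniteAlgebra K (adjointPairSubalgebra B) :=
  adjointPairSubalgebra_locallyFinite_general B
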